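/- If F ⊆ ℝ^d is a nonempty bounded set with upper box dimension 0, then its quasi-Assouad dimension is also 0. -/

import Mathlib

open Filter MeasureTheory
open scoped Topology ENNReal

/-- `coverN E r` is the smallest number of sets of diameter at most `r` needed to cover `E`. -/
noncomputable def coverN {X : Type*} [PseudoMetricSpace X] (E : Set X) (r : ℝ) : ℕ :=
  sInf {n : ℕ | ∃ s : Finset (Set X),
    s.card = n ∧ (∀ U ∈ s, Metric.diam U ≤ r) ∧ E ⊆ ⋃ U ∈ s, U}

/-- The upper box dimension of a set. -/
noncomputable def upperBoxDim {X : Type*} [PseudoMetricSpace X] (F : Set X) : ℝ :=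
  Filter.limsup (fun r : ℝ => Real.log (coverN F r : ℝ) / (-Real.log r))
    (nhdsWithin (0 : ℝ) (Set.Ioi 0))

/-- `quasiAssouadFunc F δ` is the function `h_F(δ)` whose limit as `δ → 0⁺` defines the
quasi-Assouad dimension of `F`. -/
noncomputable def quasiAssouadFunc {X : Type*} [PseudoMetricSpace X] (F : Set X) (δ : ℝ) : ℝ :=
  sInf {α : ℝ | 0 ≤ α ∧ ∃ C : ℝ, 0 < C ∧ ∀ x ∈ F, ∀ r R : ℝ, 0 < r → 0 < R →
    r ≤ R ^ (1 + δ) → R ^ (1 + δ) < 1 →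
    (coverN (Metric.closedBall x R ∩ F) r : ℝ) ≤ C * (R / r) ^ α}

/-!
Upper box dimension `0` means `N_r(F) ≤ r ^ (-ε)` for every `ε > 0` and all small `r`. When
`r ≤ R ^ (1 + δ)` we have `R / r ≥ r ^ (-δ / (1 + δ))`, so taking `ε = α δ / (1 + δ)` gives
`N_r(B(x, R) ∩ F) ≤ N_r(F) ≤ (R / r) ^ α` at small scales, while the finitely many large scales
are absorbed into the constant. In `ℝ^d` a grid gives `N_r(F) ≤ r ^ (-2d)`, which keeps
`log N_r(F) / (-log r)` bounded, so that its `limsup` is not a junk value.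
-/

open Bornology Metric Real Set

theorem log_div_neg_log_le_iff {N r s : ℝ} (hN : 0 < N) (hr₀ : 0 < r) (hr₁ : r < 1) :
    log N / -log r ≤ s ↔ N ≤ r ^ (-s) := by
  rw [div_le_iff₀ (neg_pos.2 (log_neg hr₀ hr₁)), log_le_iff_le_exp hN, rpow_def_of_pos hr₀,
    mul_neg, mul_neg, mul_comm]

theorem rpow_neg_le_div_rpow_of_le_rpow {r R δ α : ℝ} (hr : 0 < r) (hR : 0 ≤ R) (hδ : 0 < 1 + δ)
    (hα : 0 ≤ α) (hrR : r ≤ R ^ (1 + δ)) : r ^ (-(α * δ / (1 + δ))) ≤ (R / r) ^ α := by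
  have hroot : r ^ (1 + δ)⁻¹ ≤ R := (rpow_inv_le_iff_of_pos hr.le hR hδ).2 hrR
  have hexp : -(α * δ / (1 + δ)) = ((1 + δ)⁻¹ - 1) * α := by field_simp; ring
  calc r ^ (-(α * δ / (1 + δ))) = (r ^ (1 + δ)⁻¹ / r) ^ α := by
        rw [hexp, rpow_mul hr.le, rpow_sub_one hr.ne']
    _ ≤ (R / r) ^ α := by gcongr

section PseudoMetric

variable {X : Type*} [PseudoMetricSpace X]

theorem coverN_le_card {E : Set X} {r : ℝ} {s : Finset (Set X)} (hs : ∀ U ∈ s, diam U ≤ r)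
    (hE : E ⊆ ⋃ U ∈ s, U) : coverN E r ≤ s.card :=
  Nat.sInf_le ⟨s, rfl, hs, hE⟩

theorem TotallyBounded.exists_finset_cover {E : Set X} (hE : TotallyBounded E) {r : ℝ}
    (hr : 0 < r) : ∃ s : Finset (Set X), (∀ U ∈ s, diam U ≤ r) ∧ E ⊆ ⋃ U ∈ s, U := by
  classical
  obtain ⟨t, ht, hEt⟩ := totallyBounded_iff.1 hE (r / 2) (half_pos hr)
  refine ⟨ht.toFinset.image (ball · (r / 2)), ?_, ?_⟩
  · simp only [Finset.mem_image]
    rintro _ ⟨y, -, rfl⟩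
    linarith [diam_ball (x := y) (half_pos hr).le]
  · simpa [Finset.set_biUnion_finset_image] using hEt

theorem coverN_mono {E E' : Set X} {r r' : ℝ} (hE : E ⊆ E') (hr : r' ≤ r)
    (hE' : TotallyBounded E') (hr' : 0 < r') : coverN E r ≤ coverN E' r' := by
  obtain ⟨s, hs, hcov⟩ := hE'.exists_finset_cover hr'
  obtain ⟨t, ht, htr, hE't⟩ : coverN E' r' ∈ {n : ℕ | ∃ s : Finset (Set X),
      s.card = n ∧ (∀ U ∈ s, diam U ≤ r') ∧ E' ⊆ ⋃ U ∈ s, U} :=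
    Nat.sInf_mem ⟨s.card, s, rfl, hs, hcov⟩
  rw [← ht]
  exact coverN_le_card (fun U hU => (htr U hU).trans hr) (hE.trans hE't)

theorem coverN_le_card_of_mapsTo {ι : Type*} {E : Set X} {r : ℝ} (hr : 0 ≤ r) (g : X → ι)
    {T : Finset ι} (hg : MapsTo g E T)
    (hfib : ∀ x ∈ E, ∀ y ∈ E, g x = g y → dist x y ≤ r) : coverN E r ≤ T.card := by
  classical
  refine (coverN_le_card (s := T.image fun c => E ∩ g ⁻¹' {c}) ?_ ?_).trans Finset.card_image_le
  · simp only [Finset.mem_image]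
    rintro _ ⟨c, -, rfl⟩
    exact diam_le_of_forall_dist_le hr fun x ⟨hx, hxc⟩ y ⟨hy, hyc⟩ =>
      hfib x hx y hy (hxc.trans hyc.symm)
  · intro x hx
    simp only [Finset.set_biUnion_finset_image, mem_iUnion]
    exact ⟨g x, hg hx, hx, rfl⟩

theorem isBoundedUnder_log_coverN_div_neg_log {F : Set X} {s : ℝ}
    (h : ∀ᶠ r in 𝓝[>] 0, (coverN F r : ℝ) ≤ r ^ (-s)) :
    IsBoundedUnder (· ≤ ·) (𝓝[>] 0) fun r => log (coverN F r) / -log r := by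
  refine ⟨max s 0, eventually_map.2 ?_⟩
  filter_upwards [h, Ioo_mem_nhdsGT one_pos] with r hrs ⟨hr₀, hr₁⟩
  rcases (Nat.cast_nonneg (α := ℝ) (coverN F r)).eq_or_lt with hN | hN
  · simp [← hN]
  · exact ((log_div_neg_log_le_iff hN hr₀ hr₁).2 hrs).trans (le_max_left _ _)

theorem eventually_coverN_le_rpow_of_upperBoxDim_lt {F : Set X} {ε : ℝ}
    (hb : IsBoundedUnder (· ≤ ·) (𝓝[>] 0) fun r => log (coverN F r) / -log r)
    (h : upperBoxDim F < ε) : ∀ᶠ r in 𝓝[>] 0, (coverN F r : ℝ) ≤ r ^ (-ε) := by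
  filter_upwards [eventually_lt_of_limsup_lt h hb, Ioo_mem_nhdsGT one_pos] with r hrε ⟨hr₀, hr₁⟩
  rcases (Nat.cast_nonneg (α := ℝ) (coverN F r)).eq_or_lt with hN | hN
  · rw [← hN]; positivity
  · exact (log_div_neg_log_le_iff hN hr₀ hr₁).1 hrε.le

/-- `quasiAssouadFunc F δ` is by definition `sInf (quasiAssouadExponents F δ)`. -/
def quasiAssouadExponents (F : Set X) (δ : ℝ) : Set ℝ :=
  {α : ℝ | 0 ≤ α ∧ ∃ C : ℝ, 0 < C ∧ ∀ x ∈ F, ∀ r R : ℝ, 0 < r → 0 < R →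
    r ≤ R ^ (1 + δ) → R ^ (1 + δ) < 1 →
    (coverN (closedBall x R ∩ F) r : ℝ) ≤ C * (R / r) ^ α}

theorem quasiAssouadFunc_eq_zero_of_Ioi_subset {F : Set X} {δ : ℝ}
    (h : Ioi 0 ⊆ quasiAssouadExponents F δ) : quasiAssouadFunc F δ = 0 :=
  csInf_eq_of_forall_ge_of_forall_gt_exists_lt ⟨1, h (mem_Ioi.2 one_pos)⟩ (fun _ ha => ha.1)
    fun _ hw => ⟨_, h (mem_Ioi.2 (half_pos hw)), half_lt_self hw⟩

theorem Ioi_subset_quasiAssouadExponents {F : Set X} (hF : TotallyBounded F)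
    (hb : IsBoundedUnder (· ≤ ·) (𝓝[>] 0) fun r => log (coverN F r) / -log r)
    (h : upperBoxDim F = 0) {δ : ℝ} (hδ : 0 < δ) : Ioi 0 ⊆ quasiAssouadExponents F δ := by
  intro α (hα : 0 < α)
  obtain ⟨r₀, hr₀, hsmall⟩ := mem_nhdsGT_iff_exists_Ioo_subset.1 <|
    eventually_coverN_le_rpow_of_upperBoxDim_lt hb
      (h.trans_lt (by positivity : 0 < α * δ / (1 + δ)))
  refine ⟨hα.le, max (coverN F r₀) 1, by positivity, fun x _ r R hr hR hrR hR1 => ?_⟩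
  have hlocal : coverN (closedBall x R ∩ F) r ≤ coverN F r :=
    coverN_mono inter_subset_right le_rfl hF hr
  rcases lt_or_ge r r₀ with hr_lt | hr_ge
  · calc (coverN (closedBall x R ∩ F) r : ℝ) ≤ coverN F r := by exact_mod_cast hlocal
      _ ≤ r ^ (-(α * δ / (1 + δ))) := hsmall ⟨hr, hr_lt⟩
      _ ≤ (R / r) ^ α := rpow_neg_le_div_rpow_of_le_rpow hr hR.le (by linarith) hα.le hrR
      _ ≤ _ := le_mul_of_one_le_left (by positivity) (le_max_right _ _)
  · have hR_lt_one : R < 1 := by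
      by_contra! hR_ge
      exact hR1.not_ge (one_le_rpow hR_ge (by linarith))
    have hrR' : r ≤ R := calc
      r ≤ R ^ (1 + δ) := hrR
      _ ≤ R ^ (1 : ℝ) := rpow_le_rpow_of_exponent_ge hR hR_lt_one.le (by linarith)
      _ = R := rpow_one R
    calc (coverN (closedBall x R ∩ F) r : ℝ) ≤ coverN F r₀ := by
          exact_mod_cast hlocal.trans (coverN_mono subset_rfl hr_ge hF hr₀)
      _ ≤ max (coverN F r₀ : ℝ) 1 := le_max_left _ _
      _ ≤ _ :=
        le_mul_of_one_le_right (by positivity) (one_le_rpow ((one_le_div hr).2 hrR') hα.le)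

end PseudoMetric

theorem coverN_le_of_subset_closedBall {d : ℕ} {F : Set (EuclideanSpace ℝ (Fin d))} {K r : ℝ}
    (hF : F ⊆ closedBall 0 K) (hr : 0 < r) :
    coverN F r ≤ (2 * ⌈K * (d + 1 : ℝ) / r⌉₊ + 1) ^ d := by
  -- sort points by their cell `⌊x / step⌋ ∈ [-m, m] ^ d`; a cell has diameter `≤ √d * step ≤ r`
  set step := r / (d + 1) with hstep
  have hstep0 : 0 < step := by positivity
  set m := ⌈K * (d + 1 : ℝ) / r⌉₊
  have hcard : (Fintype.piFinset fun _ : Fin d => Finset.Icc (-m : ℤ) m).card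
      = (2 * m + 1) ^ d := by
    simp only [Fintype.card_piFinset, Int.card_Icc, Finset.prod_const, Finset.card_univ,
      Fintype.card_fin]
    congr 1
    omega
  rw [← hcard]
  refine coverN_le_card_of_mapsTo hr.le (fun x j => ⌊x j / step⌋) ?_ ?_
  · intro x hx
    rw [Finset.mem_coe, Fintype.mem_piFinset]
    intro j
    have hxj : |x j / step| ≤ m := calc
      |x j / step| ≤ K / step := by
        rw [abs_div, abs_of_pos hstep0]
        gcongr
        exact (PiLp.norm_apply_le x j).trans (mem_closedBall_zero_iff.1 (hF hx))
      _ = K * (d + 1) / r := by rw [hstep, div_div_eq_mul_div]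
      _ ≤ m := Nat.le_ceil _
    rw [abs_le] at hxj
    exact Finset.mem_Icc.2 ⟨Int.le_floor.2 (by push_cast; exact hxj.1),
      Int.cast_le.1 ((Int.floor_le _).trans (mod_cast hxj.2))⟩
  · intro x _ y _ hxy
    have hcoord : ∀ j, dist (x j) (y j) ≤ step := fun j => by
      have := Int.abs_sub_lt_one_of_floor_eq_floor (congrFun hxy j)
      rw [← sub_div, abs_div, abs_of_pos hstep0, div_lt_one hstep0] at this
      exact this.le
    rw [EuclideanSpace.dist_eq, Real.sqrt_le_iff]
    refine ⟨hr.le, ?_⟩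
    calc ∑ j, dist (x j) (y j) ^ 2 ≤ ∑ _j : Fin d, step ^ 2 :=
          Finset.sum_le_sum fun j _ => pow_le_pow_left₀ dist_nonneg (hcoord j) 2
      _ = d * r ^ 2 / (d + 1) ^ 2 := by simp [hstep, div_pow]; ring
      _ ≤ r ^ 2 := by
          have hd : (d : ℝ) ≤ (d + 1) ^ 2 := by nlinarith
          rw [div_le_iff₀ (by positivity)]
          nlinarith [mul_le_mul_of_nonneg_left hd (sq_nonneg r)]

theorem Bornology.IsBounded.eventually_coverN_le_rpow {d : ℕ}
    {F : Set (EuclideanSpace ℝ (Fin d))} (hF : IsBounded F) :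
    ∀ᶠ r in 𝓝[>] 0, (coverN F r : ℝ) ≤ r ^ (-(2 * d : ℝ)) := by
  obtain ⟨K, hK, hFK⟩ := hF.subset_closedBall_lt 0 0
  set a := K * (d + 1)
  have ha : 0 < a := by positivity
  filter_upwards [Ioo_mem_nhdsGT (show (0 : ℝ) < 1 / (2 * a + 3) by positivity)] with r ⟨hr, hra⟩
  rw [lt_div_iff₀ (by positivity)] at hra
  have hceil : (2 * ⌈a / r⌉₊ + 1 : ℝ) ≤ (r ^ 2)⁻¹ := by
    have h := Nat.ceil_lt_add_one (div_pos ha hr).le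
    rw [div_add_one hr.ne', lt_div_iff₀ hr] at h
    rw [← one_div, le_div_iff₀ (by positivity)]
    nlinarith [mul_lt_mul_of_pos_right h hr]
  calc (coverN F r : ℝ) ≤ ((2 * ⌈a / r⌉₊ + 1 : ℕ) : ℝ) ^ d := by
        rw [← Nat.cast_pow]
        exact Nat.cast_le.2 (coverN_le_of_subset_closedBall hFK hr)
    _ ≤ ((r ^ 2)⁻¹) ^ d := by gcongr; push_cast; exact hceil
    _ = r ^ (-(2 * d : ℝ)) := by
        rw [Real.rpow_neg hr.le, inv_pow, ← pow_mul]; norm_cast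

theorem quasiAssouad_eq_zero_of_upperBoxDim_eq_zero_general (d : ℕ)
    (F : Set (EuclideanSpace ℝ (Fin d))) (hbd : Bornology.IsBounded F)
    (h : upperBoxDim F = 0) :
    Filter.Tendsto (fun δ : ℝ => quasiAssouadFunc F δ)
      (nhdsWithin (0 : ℝ) (Set.Ioi 0)) (nhds (0 : ℝ)) := by
  have hF : TotallyBounded F := hbd.isCompact_closure.totallyBounded.subset subset_closure
  have hb := isBoundedUnder_log_coverN_div_neg_log hbd.eventually_coverN_le_rpow
  refine tendsto_const_nhds.congr' ?_
  filter_upwards [self_mem_nhdsWithin] with δ hδ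
  exact (quasiAssouadFunc_eq_zero_of_Ioi_subset
    (Ioi_subset_quasiAssouadExponents hF hb h hδ)).symm

/-- If `F ⊆ ℝ^d` is a nonempty bounded set with upper box dimension `0`, then its
quasi-Assouad dimension (the limit of `h_F(δ)` as `δ → 0⁺`) is also `0`. -/
theorem quasiAssouad_eq_zero_of_upperBoxDim_eq_zero (d : ℕ)
    (F : Set (EuclideanSpace ℝ (Fin d))) (hne : F.Nonempty) (hbd : Bornology.IsBounded F)
    (h : upperBoxDim F = 0) :
    Filter.Tendsto (fun δ : ℝ => quasiAssouadFunc F δ)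
      (nhdsWithin (0 : ℝ) (Set.Ioi 0)) (nhds (0 : ℝ)) :=
  quasiAssouad_eq_zero_of_upperBoxDim_eq_zero_general d F hbd h
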